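/- arXiv:2407.05661 — 5 statements merged into one kernel-verified Lean document; each statement's English description precedes it below -/
import Mathlib

section
/- Let r > 0, T > 0, λ ∈ ℝ and set ϖ = 1/(r²(1+r²)). Then there exists a C² function u : ℝ² → ℝ with u(t,θ+2π) = u(t,θ) for all (t,θ), not identically zero on [0,T]×ℝ, satisfying (1/(1+r²))∂²u/∂t² + (1/r²)∂²u/∂θ² + (ϖ + λ)u = 0 at every point of [0,T]×ℝ and the Dirichlet conditions u(0,θ) = u(T,θ) = 0 for all θ, if and only if there exist integers m ≥ 1 and n ≥ 0 such that λ = m²π²/((1+r²)T²) + (n²(1+r²) − 1)/(r²(1+r²)). -/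
/-!
Project an eigenfunction `u` onto a Fourier mode `w(θ) = cos (n θ + φ)` in which `u(t₀, ·)` has a
nonzero coefficient; one exists by completeness of the Fourier basis of `L²(ℝ/2πℤ)`.
Differentiating under the integral and integrating by parts twice in `θ`, the coefficient
`V t = ∫₀^{2π} u(t, θ) w(θ) dθ` solves `V'' = ((b n² - K) / a) V` on `[0, T]`, where the equation is
`a ∂ₜ²u + b ∂θ²u + K u = 0`, and it vanishes at `0` and `T` without vanishing identically. By ODE
uniqueness such a solution is a multiple of `sin (k t)`, `t` or `sinh (k t)`, so `(b n² - K) / a`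
must be `-(m π / T)²` with `m ≥ 1`. Conversely `sin (m π t / T) cos (n θ)` is an eigenfunction.
-/

open Real Set Function intervalIntegral

theorem deriv_deriv_eq_of_hasDerivAt {f f' f'' : ℝ → ℝ} (hf : ∀ x, HasDerivAt f (f' x) x)
    (hf' : ∀ x, HasDerivAt f' (f'' x) x) (x : ℝ) : deriv (deriv f) x = f'' x := by
  rw [show deriv f = f' from funext fun x => (hf x).deriv]
  exact (hf' x).deriv

theorem Function.Periodic.periodic_of_hasDerivAt {f f' : ℝ → ℝ} {c : ℝ} (hf : Periodic f c)
    (hd : ∀ x, HasDerivAt f (f' x) x) : Periodic f' c := fun x => by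
  have h := (hd (x + c)).comp_add_const x c
  rw [show (fun y => f (y + c)) = f from funext hf] at h
  exact h.unique (hd x)

theorem Function.Periodic.comp_int_mul_add {g : ℝ → ℝ} {c : ℝ} (hg : Periodic g c) (n : ℤ)
    (φ : ℝ) : Periodic (fun x => g (n * x + φ)) c := fun x => by
  simpa only [mul_add, add_right_comm] using hg.int_mul n (n * x + φ)

theorem hasDerivAt_cos_mul_add (k φ x : ℝ) :
    HasDerivAt (fun y => cos (k * y + φ)) (-(k * sin (k * x + φ))) x :=
  (((hasDerivAt_const_mul k).add_const φ).cos (x := x)).congr_deriv (by ring)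

theorem hasDerivAt_neg_mul_sin_mul_add (k φ x : ℝ) :
    HasDerivAt (fun y => -(k * sin (k * y + φ))) (-k ^ 2 * cos (k * x + φ)) x :=
  ((((hasDerivAt_const_mul k).add_const φ).sin (x := x)).const_mul k).neg.congr_deriv (by ring)

theorem deriv_deriv_combination_sin_mul_cos (a b K k n t θ : ℝ) :
    a * deriv (deriv fun x => sin (k * x) * cos (n * θ)) t
      + b * deriv (deriv fun y => sin (k * t) * cos (n * y)) θ + K * (sin (k * t) * cos (n * θ))
      = (K - a * k ^ 2 - b * n ^ 2) * (sin (k * t) * cos (n * θ)) := by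
  rw [deriv_deriv_eq_of_hasDerivAt (fun x => ((hasDerivAt_const_mul k).sin (x := x)).mul_const _)
      (fun x => (((hasDerivAt_const_mul k).cos (x := x)).mul_const k).mul_const _),
    deriv_deriv_eq_of_hasDerivAt (fun x => ((hasDerivAt_const_mul n).cos (x := x)).const_mul _)
      (fun x => (((hasDerivAt_const_mul n).sin (x := x)).neg.mul_const n).const_mul _)]
  ring

theorem AddCircle.eq_zero_of_fourierCoeff_eq_zero {T : ℝ} [Fact (0 < T)] (F : C(AddCircle T, ℂ))
    (h : ∀ n, fourierCoeff F n = 0) : F = 0 := by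
  apply ContinuousMap.toLp_injective (p := 2) (μ := haarAddCircle) (𝕜 := ℂ)
  rw [map_zero, ← fourierBasis.repr.map_eq_zero_iff]
  ext i
  rw [fourierBasis_repr, fourierCoeff_toLp, h]
  rfl

theorem exists_integral_mul_cos_ne_zero {g : ℝ → ℝ} (hg : Continuous g) (hper : Periodic g (2 * π))
    (hne : ∃ θ, g θ ≠ 0) : ∃ (n : ℤ) (φ : ℝ), ∫ θ in 0..2 * π, g θ * cos (n * θ + φ) ≠ 0 := by
  have : Fact (0 < 2 * π) := ⟨two_pi_pos⟩
  by_contra! h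
  obtain ⟨θ₀, hθ₀⟩ := hne
  have hG : Periodic (fun x => (g x : ℂ)) (2 * π) := hper.comp ((↑) : ℝ → ℂ)
  let F : C(AddCircle (2 * π), ℂ) :=
    ⟨hG.lift, (Complex.continuous_ofReal.comp hg).quotient_liftOn' _⟩
  suffices F = 0 from hθ₀ (Complex.ofReal_eq_zero.mp congr($this (θ₀ : AddCircle (2 * π))))
  refine AddCircle.eq_zero_of_fourierCoeff_eq_zero F fun n => ?_
  have hexp : ∀ x : ℝ, fourier (-n) (x : AddCircle (2 * π)) • F x
      = ↑(g x * cos (n * x + 0)) + ↑(g x * cos (n * x + π / 2)) * Complex.I := by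
    intro x
    rw [fourier_coe_apply, smul_eq_mul, show F x = g x from rfl, cos_add_pi_div_two, add_zero,
      show 2 * π * Complex.I * ↑(-n) * ↑x / ↑(2 * π) = ↑(-(n * x)) * Complex.I by
        push_cast; field_simp, Complex.exp_mul_I]
    push_cast
    simp only [Complex.cos_neg, Complex.sin_neg]
    ring
  have hint (φ : ℝ) : IntervalIntegrable (fun x : ℝ => (↑(g x * cos (n * x + φ)) : ℂ))
      MeasureTheory.volume 0 (2 * π) :=
    Continuous.intervalIntegrable (by fun_prop) _ _
  rw [fourierCoeff_eq_intervalIntegral _ _ 0, zero_add]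
  simp_rw [hexp]
  rw [integral_add (hint 0) ((hint _).mul_const _), intervalIntegral.integral_mul_const,
    integral_ofReal, integral_ofReal, h, h]
  simp

theorem eqOn_Icc_of_hasDerivAt_linear {E : Type*} [NormedAddCommGroup E] [NormedSpace ℝ E]
    (L : E →L[ℝ] E) {f g : ℝ → E} {a b : ℝ}
    (hf : ∀ t ∈ Icc a b, HasDerivAt f (L (f t)) t) (hg : ∀ t ∈ Icc a b, HasDerivAt g (L (g t)) t)
    (ha : f a = g a) : EqOn f g (Icc a b) :=
  ODE_solution_unique_of_mem_Icc_right (v := fun _ => L) (s := fun _ => univ)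
    (fun _ _ => L.lipschitz.lipschitzOnWith)
    (fun t ht => (hf t ht).continuousAt.continuousWithinAt)
    (fun t ht => (hf t (Ico_subset_Icc_self ht)).hasDerivWithinAt) (fun _ _ => trivial)
    (fun t ht => (hg t ht).continuousAt.continuousWithinAt)
    (fun t ht => (hg t (Ico_subset_Icc_self ht)).hasDerivWithinAt) (fun _ _ => trivial) ha

theorem eqOn_Icc_of_second_order_linear {c a b : ℝ} {v v' s s' : ℝ → ℝ}
    (hv : ∀ t ∈ Icc a b, HasDerivAt v (v' t) t) (hv' : ∀ t ∈ Icc a b, HasDerivAt v' (c * v t) t)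
    (hs : ∀ t ∈ Icc a b, HasDerivAt s (s' t) t) (hs' : ∀ t ∈ Icc a b, HasDerivAt s' (c * s t) t)
    (h₀ : v a = s a) (h₀' : v' a = s' a) : EqOn v s (Icc a b) := fun _ ht =>
  let L := (ContinuousLinearMap.snd ℝ ℝ ℝ).prod (c • ContinuousLinearMap.fst ℝ ℝ ℝ)
  congrArg Prod.fst <| eqOn_Icc_of_hasDerivAt_linear L (f := fun t => (v t, v' t))
    (g := fun t => (s t, s' t)) (fun t ht => (hv t ht).prodMk (hv' t ht))
    (fun t ht => (hs t ht).prodMk (hs' t ht)) (Prod.ext h₀ h₀') ht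

theorem exists_nat_eq_mul_pi_of_sin_eq_zero {x : ℝ} (hx : 0 < x) (h : sin x = 0) :
    ∃ m : ℕ, 1 ≤ m ∧ x = m * π := by
  obtain ⟨m, rfl⟩ := sin_eq_zero_iff.mp h
  have hm : 0 < m := by exact_mod_cast pos_of_mul_pos_left hx pi_pos.le
  refine ⟨m.toNat, by omega, ?_⟩
  rw [show ((m.toNat : ℕ) : ℝ) = m by exact_mod_cast Int.toNat_of_nonneg hm.le]

theorem exists_nat_eq_neg_sq_of_dirichlet_solution {c T : ℝ} (hT : 0 < T) {v v' : ℝ → ℝ}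
    (hv : ∀ t ∈ Icc 0 T, HasDerivAt v (v' t) t) (hv' : ∀ t ∈ Icc 0 T, HasDerivAt v' (c * v t) t)
    (h0 : v 0 = 0) (hT0 : v T = 0) (hne : ∃ t ∈ Icc 0 T, v t ≠ 0) :
    ∃ m : ℕ, 1 ≤ m ∧ c = -((m : ℝ) ^ 2 * π ^ 2 / T ^ 2) := by
  obtain ⟨t₀, ht₀, hvt₀⟩ := hne
  have agree : ∀ s s' : ℝ → ℝ, (∀ t, HasDerivAt s (s' t) t) → (∀ t, HasDerivAt s' (c * s t) t) →
      s 0 = 0 → s' 0 = v' 0 → EqOn v s (Icc 0 T) := fun s s' hs hs' hs0 hs0' =>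
    eqOn_Icc_of_second_order_linear hv hv' (fun t _ => hs t) (fun t _ => hs' t)
      (h0.trans hs0.symm) hs0'.symm
  have hT' : T ∈ Icc 0 T := right_mem_Icc.mpr hT.le
  set α := v' 0
  have hα : α ≠ 0 := fun hα => hvt₀ <| agree 0 0 (fun _ => hasDerivAt_const _ _)
    (fun _ => by simp) rfl hα.symm ht₀
  rcases lt_trichotomy c 0 with hc | rfl | hc
  · obtain ⟨k, hk, rfl⟩ : ∃ k > 0, c = -k ^ 2 :=
      ⟨√(-c), sqrt_pos.mpr (neg_pos.mpr hc), by rw [sq_sqrt (neg_pos.mpr hc).le, neg_neg]⟩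
    have hs := agree (fun t => α / k * sin (k * t)) (fun t => α * cos (k * t))
      (fun t => ((hasDerivAt_const_mul k).sin.const_mul _).congr_deriv (by field_simp))
      (fun t => ((hasDerivAt_const_mul k).cos.const_mul _).congr_deriv (by field_simp))
      (by simp) (by simp) hT'
    obtain ⟨m, hm, hkT⟩ := exists_nat_eq_mul_pi_of_sin_eq_zero (mul_pos hk hT) <| by
      simpa [hα, hk.ne'] using hs.symm.trans hT0
    refine ⟨m, hm, ?_⟩
    rw [show k = m * π / T by field_simp; linarith]
    ring
  · have hs := agree (fun t => α * t) (fun _ => α) (fun _ => hasDerivAt_const_mul α)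
      (fun t => by simpa using hasDerivAt_const t α) (by simp) rfl hT'
    simp [hT0, hα, hT.ne'] at hs
  · obtain ⟨k, hk, rfl⟩ : ∃ k > 0, c = k ^ 2 := ⟨√c, sqrt_pos.mpr hc, (sq_sqrt hc.le).symm⟩
    have hs := agree (fun t => α / k * sinh (k * t)) (fun t => α * cosh (k * t))
      (fun t => ((hasDerivAt_const_mul k).sinh.const_mul _).congr_deriv (by field_simp))
      (fun t => ((hasDerivAt_const_mul k).cosh.const_mul _).congr_deriv (by field_simp))
      (by simp) (by simp) hT'
    simp [hT0, hα, hk.ne', (mul_pos hk hT).ne'] at hs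

theorem ContDiff.exists_continuous_second_partial_fst {f : ℝ × ℝ → ℝ} (hf : ContDiff ℝ 2 f) :
    ∃ f₁ f₁₁ : ℝ × ℝ → ℝ, Continuous f₁ ∧ Continuous f₁₁ ∧
      (∀ t θ, HasDerivAt (fun x => f (x, θ)) (f₁ (t, θ)) t) ∧
      ∀ t θ, HasDerivAt (fun x => f₁ (x, θ)) (f₁₁ (t, θ)) t := by
  have partial_fst : ∀ {g : ℝ × ℝ → ℝ}, Differentiable ℝ g → ∀ t θ,
      HasDerivAt (fun x => g (x, θ)) (fderiv ℝ g (t, θ) (1, 0)) t := fun hg t θ =>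
    (hg _).hasFDerivAt.comp_hasDerivAt t ((hasDerivAt_id t).prodMk (hasDerivAt_const t θ))
  have hf₁ : ContDiff ℝ 1 fun q => fderiv ℝ f q (1, 0) :=
    (hf.fderiv_right le_rfl).clm_apply contDiff_const
  exact ⟨_, _, hf₁.continuous,
    (hf₁.continuous_fderiv_apply one_ne_zero).comp (continuous_id.prodMk continuous_const),
    partial_fst (hf.differentiable two_ne_zero), partial_fst (hf₁.differentiable one_ne_zero)⟩

theorem ContDiff.exists_continuous_second_partial_snd {f : ℝ × ℝ → ℝ} (hf : ContDiff ℝ 2 f) :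
    ∃ f₂ f₂₂ : ℝ × ℝ → ℝ, Continuous f₂ ∧ Continuous f₂₂ ∧
      (∀ t θ, HasDerivAt (fun y => f (t, y)) (f₂ (t, θ)) θ) ∧
      ∀ t θ, HasDerivAt (fun y => f₂ (t, y)) (f₂₂ (t, θ)) θ := by
  obtain ⟨g₁, g₁₁, hc, hc', hd, hd'⟩ :=
    (hf.comp (contDiff_snd.prodMk contDiff_fst)).exists_continuous_second_partial_fst
  exact ⟨g₁ ∘ Prod.swap, g₁₁ ∘ Prod.swap, hc.comp continuous_swap, hc'.comp continuous_swap,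
    fun t θ => hd θ t, fun t θ => hd' θ t⟩

theorem hasDerivAt_intervalIntegral_of_continuous {g g' : ℝ × ℝ → ℝ} (hg : Continuous g)
    (hg' : Continuous g') (hd : ∀ t θ, HasDerivAt (fun x => g (x, θ)) (g' (t, θ)) t)
    (a b t₀ : ℝ) :
    HasDerivAt (fun t => ∫ θ in a..b, g (t, θ)) (∫ θ in a..b, g' (t₀, θ)) t₀ := by
  obtain ⟨M, hM⟩ := (isCompact_closedBall t₀ 1).prod isCompact_uIcc
    |>.exists_bound_of_continuousOn hg'.continuousOn
  refine (hasDerivAt_integral_of_dominated_loc_of_deriv_le (bound := fun _ => M)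
    (Metric.ball_mem_nhds t₀ one_pos)
    (.of_forall fun x => (hg.comp (.prodMk_right x)).aestronglyMeasurable)
    ((hg.comp (.prodMk_right t₀)).intervalIntegrable a b)
    (hg'.comp (.prodMk_right t₀)).aestronglyMeasurable
    (.of_forall fun θ hθ x hx => hM (x, θ) ⟨Metric.ball_subset_closedBall hx, uIoc_subset_uIcc hθ⟩)
    intervalIntegrable_const (.of_forall fun θ _ x _ => hd x θ)).2

theorem integral_deriv_deriv_mul_eq_of_periodic {c : ℝ} {h h' h'' w w' w'' : ℝ → ℝ}
    (hh : ∀ x, HasDerivAt h (h' x) x) (hh' : ∀ x, HasDerivAt h' (h'' x) x)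
    (hw : ∀ x, HasDerivAt w (w' x) x) (hw' : ∀ x, HasDerivAt w' (w'' x) x)
    (ch'' : Continuous h'') (cw'' : Continuous w'')
    (ph : Periodic h c) (ph' : Periodic h' c) (pw : Periodic w c) (pw' : Periodic w' c) :
    ∫ x in 0..c, h'' x * w x = ∫ x in 0..c, h x * w'' x := by
  have cont : ∀ {f f' : ℝ → ℝ}, (∀ x, HasDerivAt f (f' x) x) → Continuous f := fun hf =>
    continuous_iff_continuousAt.mpr fun x => (hf x).continuousAt
  have I₁ := integral_mul_deriv_eq_deriv_mul (a := 0) (b := c) (fun x _ => hw x) (fun x _ => hh' x)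
      ((cont hw').intervalIntegrable _ _) (ch''.intervalIntegrable _ _)
  have I₂ := integral_mul_deriv_eq_deriv_mul (a := 0) (b := c) (fun x _ => hh x) (fun x _ => hw' x)
      ((cont hh').intervalIntegrable _ _) (cw''.intervalIntegrable _ _)
  have ends : ∀ {f : ℝ → ℝ}, Periodic f c → f c = f 0 := fun hf => by simpa using hf 0
  rw [ends ph', ends pw] at I₁
  rw [ends ph, ends pw'] at I₂
  simp only [mul_comm (h'' _), mul_comm (w' _) (h' _)] at I₁ ⊢
  rw [I₁, I₂]
  ring

theorem exists_hasDerivAt_integral_mul_of_pde {u : ℝ → ℝ → ℝ} (hu : ContDiff ℝ 2 (uncurry u))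
    {p : ℝ} (hper : ∀ t, Periodic (u t) p) {a b K μ : ℝ} (ha : a ≠ 0) {s : Set ℝ}
    (hpde : ∀ t ∈ s, ∀ θ, a * deriv (deriv fun x => u x θ) t + b * deriv (deriv (u t)) θ
      + K * u t θ = 0)
    {w w' : ℝ → ℝ} (hw : ∀ x, HasDerivAt w (w' x) x) (hw' : ∀ x, HasDerivAt w' (-μ * w x) x)
    (pw : Periodic w p) (pw' : Periodic w' p) :
    ∃ V' : ℝ → ℝ, (∀ t, HasDerivAt (fun t => ∫ θ in 0..p, u t θ * w θ) (V' t) t) ∧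
      ∀ t ∈ s, HasDerivAt V' ((b * μ - K) / a * ∫ θ in 0..p, u t θ * w θ) t := by
  obtain ⟨f₁, f₁₁, c₁, c₁₁, d₁, d₁₁⟩ := hu.exists_continuous_second_partial_fst
  obtain ⟨f₂, f₂₂, -, c₂₂, d₂, d₂₂⟩ := hu.exists_continuous_second_partial_snd
  have cw : Continuous w := continuous_iff_continuousAt.mpr fun x => (hw x).continuousAt
  have cwp : Continuous fun q : ℝ × ℝ => w q.2 := cw.comp continuous_snd
  refine ⟨fun t => ∫ θ in 0..p, f₁ (t, θ) * w θ, fun t =>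
    hasDerivAt_intervalIntegral_of_continuous (g := fun q => u q.1 q.2 * w q.2)
      (hu.continuous.mul cwp) (c₁.mul cwp) (fun t θ => (d₁ t θ).mul_const (w θ)) 0 p t,
    fun t ht => (hasDerivAt_intervalIntegral_of_continuous (g := fun q => f₁ q * w q.2)
      (c₁.mul cwp) (c₁₁.mul cwp) (fun t θ => (d₁₁ t θ).mul_const (w θ)) 0 p t).congr_deriv ?_⟩
  have ibp : ∫ θ in 0..p, f₂₂ (t, θ) * w θ = -μ * ∫ θ in 0..p, u t θ * w θ := by
    rw [← integral_const_mul]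
    simp only [mul_left_comm (-μ)]
    exact integral_deriv_deriv_mul_eq_of_periodic (d₂ t) (d₂₂ t) hw hw'
      (c₂₂.comp (.prodMk_right t)) (continuous_const.mul cw) (hper t)
      ((hper t).periodic_of_hasDerivAt (d₂ t)) pw pw'
  have hf₁₁ (θ : ℝ) :
      f₁₁ (t, θ) * w θ = -(b / a) * (f₂₂ (t, θ) * w θ) + -(K / a) * (u t θ * w θ) := by
    have := hpde t ht θ
    rw [deriv_deriv_eq_of_hasDerivAt (f := fun x => u x θ) (d₁ · θ) (d₁₁ · θ),
      deriv_deriv_eq_of_hasDerivAt (f := u t) (d₂ t) (d₂₂ t)] at this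
    field_simp
    linear_combination w θ * this
  have cu : Continuous (u t) := hu.continuous.comp (.prodMk_right t)
  show ∫ θ in 0..p, f₁₁ (t, θ) * w θ = _
  simp only [hf₁₁]
  have c₂₂t : Continuous fun θ => f₂₂ (t, θ) := c₂₂.comp (.prodMk_right t)
  rw [integral_add ?_ ?_, integral_const_mul, integral_const_mul, ibp]
  · field_simp
    ring
  all_goals exact Continuous.intervalIntegrable (by fun_prop) _ _

def IsDirichletEigenfunction (a b K T : ℝ) (u : ℝ → ℝ → ℝ) : Prop :=
  ContDiff ℝ 2 (uncurry u) ∧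
    (∀ t θ : ℝ, u t (θ + 2 * π) = u t θ) ∧
    (∃ t ∈ Icc (0 : ℝ) T, ∃ θ : ℝ, u t θ ≠ 0) ∧
    (∀ t ∈ Icc (0 : ℝ) T, ∀ θ : ℝ,
      a * deriv (deriv fun x => u x θ) t + b * deriv (deriv (u t)) θ + K * u t θ = 0) ∧
    ∀ θ : ℝ, u 0 θ = 0 ∧ u T θ = 0

theorem IsDirichletEigenfunction.exists_nat {a b K T : ℝ} {u : ℝ → ℝ → ℝ}
    (hu : IsDirichletEigenfunction a b K T u) (ha : a ≠ 0) (hT : 0 < T) :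
    ∃ m n : ℕ, 1 ≤ m ∧ K = a * (m * π / T) ^ 2 + b * n ^ 2 := by
  obtain ⟨hu, hper, ⟨t₀, ht₀, θ₀, hu₀⟩, hpde, hbc⟩ := hu
  obtain ⟨n, φ, hmode⟩ := exists_integral_mul_cos_ne_zero
    (hu.continuous.comp (.prodMk_right t₀)) (hper t₀) ⟨θ₀, hu₀⟩
  obtain ⟨V', hV, hV'⟩ := exists_hasDerivAt_integral_mul_of_pde hu hper ha hpde
    (hasDerivAt_cos_mul_add n φ) (hasDerivAt_neg_mul_sin_mul_add n φ)
    (cos_periodic.comp_int_mul_add n φ) ((sin_periodic.comp fun s => -(n * s)).comp_int_mul_add n φ)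
  obtain ⟨m, hm, hc⟩ := exists_nat_eq_neg_sq_of_dirichlet_solution hT (fun t _ => hV t) hV'
    (by simp [hbc]) (by simp [hbc]) ⟨t₀, ht₀, hmode⟩
  refine ⟨m, n.natAbs, hm, ?_⟩
  rw [Nat.cast_natAbs, Int.cast_abs, sq_abs]
  field_simp at hc ⊢
  linear_combination -hc

theorem isDirichletEigenfunction_sin_mul_cos (a b : ℝ) {T : ℝ} (hT : 0 < T) {m : ℕ} (hm : 1 ≤ m)
    (n : ℕ) : IsDirichletEigenfunction a b (a * (m * π / T) ^ 2 + b * n ^ 2) T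
      fun t θ => sin (m * π / T * t) * cos (n * θ) := by
  have hm0 : (m : ℝ) ≠ 0 := Nat.cast_ne_zero.mpr (by omega)
  refine ⟨?_, fun t θ => ?_, ⟨T / (2 * m), ⟨by positivity, ?_⟩, 0, ?_⟩, fun t _ θ => ?_,
    fun θ => ⟨by simp, ?_⟩⟩
  · show ContDiff ℝ 2 fun q : ℝ × ℝ => sin (m * π / T * q.1) * cos (n * q.2)
    fun_prop
  · dsimp only
    rw [mul_add, cos_add_nat_mul_two_pi]
  · exact div_le_self hT.le (by norm_cast; omega)
  · dsimp only
    rw [show m * π / T * (T / (2 * m)) = π / 2 by field_simp, mul_zero, cos_zero, sin_pi_div_two]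
    norm_num
  · rw [deriv_deriv_combination_sin_mul_cos]
    ring
  · dsimp only
    rw [div_mul_cancel₀ _ hT.ne', sin_nat_mul_pi, zero_mul]

theorem exists_isDirichletEigenfunction_iff {a b K T : ℝ} (ha : a ≠ 0) (hT : 0 < T) :
    (∃ u, IsDirichletEigenfunction a b K T u) ↔
      ∃ m n : ℕ, 1 ≤ m ∧ K = a * (m * π / T) ^ 2 + b * n ^ 2 :=
  ⟨fun ⟨_, hu⟩ => hu.exists_nat ha hT,
    fun ⟨_, n, hm, hK⟩ => ⟨_, hK ▸ isDirichletEigenfunction_sin_mul_cos a b hT hm n⟩⟩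

theorem killing_cylinder_dirichlet_spectrum_general
    (r T lam : ℝ) (hT : 0 < T) :
    (∃ u : ℝ → ℝ → ℝ,
      ContDiff ℝ 2 (Function.uncurry u) ∧
      (∀ t θ : ℝ, u t (θ + 2 * π) = u t θ) ∧
      (∃ t ∈ Set.Icc (0 : ℝ) T, ∃ θ : ℝ, u t θ ≠ 0) ∧
      (∀ t ∈ Set.Icc (0 : ℝ) T, ∀ θ : ℝ,
        (1 / (1 + r ^ 2)) * deriv (deriv (fun x => u x θ)) t
          + (1 / r ^ 2) * deriv (deriv (u t)) θ
          + (1 / (r ^ 2 * (1 + r ^ 2)) + lam) * u t θ = 0) ∧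
      (∀ θ : ℝ, u 0 θ = 0 ∧ u T θ = 0)) ↔
    (∃ m n : ℕ, 1 ≤ m ∧
      lam = (m : ℝ) ^ 2 * π ^ 2 / ((1 + r ^ 2) * T ^ 2)
        + ((n : ℝ) ^ 2 * (1 + r ^ 2) - 1) / (r ^ 2 * (1 + r ^ 2))) := by
  -- with `1 + r ^ 2` opaque, `ring` splits `((1 + r ^ 2) * T ^ 2)⁻¹` into a product of inverses
  generalize hρ : 1 + r ^ 2 = ρ
  have hρ0 : ρ ≠ 0 := hρ ▸ by positivity
  refine (exists_isDirichletEigenfunction_iff (one_div_ne_zero hρ0) hT).trans <|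
    exists_congr fun _ => exists_congr fun _ => and_congr_right fun _ => ?_
  rw [sub_div, mul_div_mul_right _ _ hρ0]
  constructor <;> intro h <;> linear_combination h

/-- spectrum of the Jacobi operator of a truncated Killing
cylinder `C_R^T` in hyperbolic 3-space with Dirichlet boundary conditions:
an eigenfunction exists iff
`λ = m²π²/((1+r²)T²) + (n²(1+r²) − 1)/(r²(1+r²))` for some `m ≥ 1`, `n ≥ 0`. -/
theorem killing_cylinder_dirichlet_spectrum
    (r T lam : ℝ) (hr : 0 < r) (hT : 0 < T) :
    (∃ u : ℝ → ℝ → ℝ,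
      ContDiff ℝ 2 (Function.uncurry u) ∧
      (∀ t θ : ℝ, u t (θ + 2 * π) = u t θ) ∧
      (∃ t ∈ Set.Icc (0 : ℝ) T, ∃ θ : ℝ, u t θ ≠ 0) ∧
      (∀ t ∈ Set.Icc (0 : ℝ) T, ∀ θ : ℝ,
        (1 / (1 + r ^ 2)) * deriv (deriv (fun x => u x θ)) t
          + (1 / r ^ 2) * deriv (deriv (u t)) θ
          + (1 / (r ^ 2 * (1 + r ^ 2)) + lam) * u t θ = 0) ∧
      (∀ θ : ℝ, u 0 θ = 0 ∧ u T θ = 0)) ↔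
    (∃ m n : ℕ, 1 ≤ m ∧
      lam = (m : ℝ) ^ 2 * π ^ 2 / ((1 + r ^ 2) * T ^ 2)
        + ((n : ℝ) ^ 2 * (1 + r ^ 2) - 1) / (r ^ 2 * (1 + r ^ 2))) :=
  killing_cylinder_dirichlet_spectrum_general r T lam hT
end

section
/- Let r > 0 and T > 2πr, and define f : ℝ → ℝ by f(t) = sin(2πt/T). Then f(0) = f(T) = 0, ∫₀ᵀ f(t) dt = 0, and ∫₀ᵀ ( f′(t)²/(1+r²) − f(t)²/(r²(1+r²)) ) dt < 0. -/
/-!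
Over a full period, `sin (ω t)` and `cos (ω t)` with `ω = 2π/T` both have mean square `1/2`,
so the quadratic form evaluated on `f` equals `T/2 · (ω²/(1+r²) - 1/(r²(1+r²)))`. This is
negative exactly when `ω r < 1`, i.e. when `T > 2πr`.
-/

open Real

theorem intervalIntegral.integral_comp_two_pi_mul_div (g : ℝ → ℝ) {T : ℝ} (hT : T ≠ 0) :
    ∫ t in (0 : ℝ)..T, g (2 * π * t / T) = T / (2 * π) * ∫ x in (0 : ℝ)..2 * π, g x := by
  have hc : 2 * π / T ≠ 0 := div_ne_zero (by positivity) hT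
  simp_rw [mul_div_right_comm (2 * π)]
  rw [intervalIntegral.integral_comp_mul_left g hc, mul_zero, div_mul_cancel₀ _ hT,
    inv_div, smul_eq_mul]

theorem integral_sin_two_pi_mul_div (T : ℝ) : ∫ t in (0 : ℝ)..T, sin (2 * π * t / T) = 0 := by
  rcases eq_or_ne T 0 with rfl | hT
  · simp
  rw [intervalIntegral.integral_comp_two_pi_mul_div sin hT, integral_sin]
  simp

theorem integral_sin_sq_two_pi_mul_div (T : ℝ) :
    ∫ t in (0 : ℝ)..T, sin (2 * π * t / T) ^ 2 = T / 2 := by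
  rcases eq_or_ne T 0 with rfl | hT
  · simp
  rw [intervalIntegral.integral_comp_two_pi_mul_div (sin · ^ 2) hT, integral_sin_sq]
  simp [field]

theorem integral_cos_sq_two_pi_mul_div (T : ℝ) :
    ∫ t in (0 : ℝ)..T, cos (2 * π * t / T) ^ 2 = T / 2 := by
  rcases eq_or_ne T 0 with rfl | hT
  · simp
  rw [intervalIntegral.integral_comp_two_pi_mul_div (cos · ^ 2) hT, integral_cos_sq]
  simp [field]

theorem hasDerivAt_sin_two_pi_mul_div (T t : ℝ) :
    HasDerivAt (fun t => sin (2 * π * t / T)) (2 * π / T * cos (2 * π * t / T)) t := by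
  simpa [mul_comm, mul_div_right_comm] using
    ((hasDerivAt_id t).const_mul (2 * π) |>.div_const T).sin

theorem integral_deriv_sq_div_sub_sq_div_sin_two_pi_mul_div (T a b : ℝ) :
    ∫ t in (0 : ℝ)..T,
        (deriv (fun t => sin (2 * π * t / T)) t ^ 2 / a - sin (2 * π * t / T) ^ 2 / b) =
      T / 2 * ((2 * π / T) ^ 2 / a - 1 / b) := by
  have hint : ∀ g : ℝ → ℝ, Continuous g → ∀ c : ℝ,
      IntervalIntegrable (fun t => c * g (2 * π * t / T) ^ 2) MeasureTheory.volume 0 T := by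
    intro g hg c
    apply Continuous.intervalIntegrable
    fun_prop
  calc ∫ t in (0 : ℝ)..T,
        (deriv (fun t => sin (2 * π * t / T)) t ^ 2 / a - sin (2 * π * t / T) ^ 2 / b)
      = ∫ t in (0 : ℝ)..T, ((2 * π / T) ^ 2 / a * cos (2 * π * t / T) ^ 2
          - 1 / b * sin (2 * π * t / T) ^ 2) := by
        congr 1 with t
        rw [(hasDerivAt_sin_two_pi_mul_div T t).deriv]
        ring
    _ = T / 2 * ((2 * π / T) ^ 2 / a - 1 / b) := by
        rw [intervalIntegral.integral_sub (hint cos continuous_cos _) (hint sin continuous_sin _),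
          intervalIntegral.integral_const_mul, intervalIntegral.integral_const_mul,
          integral_cos_sq_two_pi_mul_div, integral_sin_sq_two_pi_mul_div]
        ring

theorem two_pi_div_sq_div_lt {r T : ℝ} (hr : 0 < r) (hT : 2 * π * r < T) :
    (2 * π / T) ^ 2 / (1 + r ^ 2) < 1 / (r ^ 2 * (1 + r ^ 2)) := by
  have hT0 : 0 < T := by linarith [mul_pos two_pi_pos hr]
  have h : 2 * π / T * r < 1 := by rwa [div_mul_eq_mul_div, div_lt_one hT0]
  rw [← div_div, div_lt_div_iff_of_pos_right (by positivity),
    lt_div_iff₀ (by positivity), ← mul_pow]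
  exact pow_lt_one₀ (by positivity) h two_ne_zero

/-- Plateau–Rayleigh instability in hyperbolic space: for
`T > 2πr`, the test function `f(t) = sin(2πt/T)` vanishes at `0` and `T`,
has zero mean, and makes the Jacobi quadratic form negative. -/
theorem plateau_rayleigh_instability
    (r T : ℝ) (hr : 0 < r) (hT : 2 * π * r < T)
    (f : ℝ → ℝ) (hf : ∀ t, f t = Real.sin (2 * π * t / T)) :
    f 0 = 0 ∧ f T = 0 ∧ (∫ t in (0 : ℝ)..T, f t) = 0 ∧
    (∫ t in (0 : ℝ)..T,
      ((deriv f t) ^ 2 / (1 + r ^ 2) - (f t) ^ 2 / (r ^ 2 * (1 + r ^ 2)))) < 0 := by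
  obtain rfl : f = fun t => sin (2 * π * t / T) := funext hf
  have hT0 : 0 < T := by linarith [mul_pos two_pi_pos hr]
  refine ⟨by simp, by simp [hT0.ne'], integral_sin_two_pi_mul_div T, ?_⟩
  rw [integral_deriv_sq_div_sub_sq_div_sin_two_pi_mul_div]
  exact mul_neg_of_pos_of_neg (half_pos hT0) (sub_neg.2 (two_pi_div_sq_div_lt hr hT))
end

section
/- Let σ > 1 and δ > 0. Then ((σ+1)/(σ−1))^δ · (σ − δ) = σ + δ if and only if δ = 1. -/
/-!
Taking logarithms, for `0 < δ < σ` the equation says `g δ = δ * g 1`, where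
`g x = log (σ + x) - log (σ - x) = 2 artanh (x / σ)`. Since `g` is strictly convex on `[0, σ)`
with `g 0 = 0`, the slope `g x / x` is strictly increasing there, so `δ = 1` is the only solution.
For `δ ≥ σ` the left-hand side is `≤ 0 < σ + δ`.
-/

open Real Set

theorem StrictConvexOn.strictMonoOn_div_self {𝕜 : Type*} [Field 𝕜] [LinearOrder 𝕜]
    [IsStrictOrderedRing 𝕜] {s : Set 𝕜} {f : 𝕜 → 𝕜} (hf : StrictConvexOn 𝕜 s f) (h0 : 0 ∈ s)
    (hf0 : f 0 = 0) : StrictMonoOn (fun x ↦ f x / x) (s \ {0}) := by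
  intro x hx y hy hxy
  simpa [hf0] using hf.secant_strict_mono h0 hx.1 hy.1 hx.2 hy.2 hxy

namespace TranscendentalEquation

noncomputable def logRatio (σ x : ℝ) : ℝ := log (σ + x) - log (σ - x)

variable {σ x : ℝ}

theorem logRatio_zero : logRatio σ 0 = 0 := by simp [logRatio]

theorem logRatio_eq_log_div (hadd : 0 < σ + x) (hsub : 0 < σ - x) :
    logRatio σ x = log ((σ + x) / (σ - x)) :=
  (log_div hadd.ne' hsub.ne').symm

theorem hasDerivAt_logRatio (hadd : 0 < σ + x) (hsub : 0 < σ - x) :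
    HasDerivAt (logRatio σ) (2 * σ / (σ ^ 2 - x ^ 2)) x := by
  have hplus := ((hasDerivAt_id x).const_add σ).log hadd.ne'
  have hminus := ((hasDerivAt_id x).const_sub σ).log hsub.ne'
  refine (hplus.sub hminus).congr_deriv ?_
  rw [show σ ^ 2 - x ^ 2 = (σ + x) * (σ - x) by ring]
  simp only [id]
  field_simp
  ring

theorem strictConvexOn_logRatio (hσ : 0 < σ) : StrictConvexOn ℝ (Ico 0 σ) (logRatio σ) := by
  have hcont : ContinuousOn (logRatio σ) (Ico 0 σ) := fun x hx ↦
    (hasDerivAt_logRatio (by linarith [hx.1]) (by linarith [hx.2])).continuousAt.continuousWithinAt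
  refine StrictMonoOn.strictConvexOn_of_deriv (convex_Ico 0 σ) hcont ?_
  rw [interior_Ico]
  intro x hx y hy hxy
  rw [(hasDerivAt_logRatio (by linarith [hx.1]) (by linarith [hx.2])).deriv,
    (hasDerivAt_logRatio (by linarith [hy.1]) (by linarith [hy.2])).deriv]
  apply div_lt_div_of_pos_left (by positivity) (by nlinarith [hy.1, hy.2])
  nlinarith [hx.1]

theorem rpow_mul_sub_eq_add_iff (hσ : 1 < σ) {δ : ℝ} (hδ : 0 < δ) (hδσ : δ < σ) :
    ((σ + 1) / (σ - 1)) ^ δ * (σ - δ) = σ + δ ↔ logRatio σ δ / δ = logRatio σ 1 / 1 := by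
  have hq : 0 < (σ + 1) / (σ - 1) := div_pos (by linarith) (by linarith)
  have hA : 0 < (σ + δ) / (σ - δ) := div_pos (by linarith) (by linarith)
  calc _ ↔ ((σ + 1) / (σ - 1)) ^ δ = (σ + δ) / (σ - δ) := (eq_div_iff (by linarith)).symm
    _ ↔ log (((σ + 1) / (σ - 1)) ^ δ) = log ((σ + δ) / (σ - δ)) :=
      (log_injOn_pos.eq_iff (rpow_pos_of_pos hq δ) hA).symm
    _ ↔ _ := by
      rw [log_rpow hq, logRatio_eq_log_div (x := δ) (by linarith) (by linarith),
        logRatio_eq_log_div (x := 1) (by linarith) (by linarith), div_one, div_eq_iff hδ.ne',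
        eq_comm, mul_comm]

end TranscendentalEquation

open TranscendentalEquation in
/-- for `σ > 1` and `δ > 0`, the transcendental equation
`((σ+1)/(σ−1))^δ (σ − δ) = σ + δ` holds iff `δ = 1`. -/
theorem transcendental_equation_ball
    (σ δ : ℝ) (hσ : 1 < σ) (hδ : 0 < δ) :
    ((σ + 1) / (σ - 1)) ^ δ * (σ - δ) = σ + δ ↔ δ = 1 := by
  constructor
  · intro h
    have hδσ : δ < σ := by
      by_contra! hσδ
      have hq : 0 < ((σ + 1) / (σ - 1)) ^ δ :=
        rpow_pos_of_pos (div_pos (by linarith) (by linarith)) δ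
      linarith [mul_nonpos_of_nonneg_of_nonpos hq.le (sub_nonpos.2 hσδ)]
    have hslope := (strictConvexOn_logRatio (σ := σ) (by linarith)).strictMonoOn_div_self
      ⟨le_rfl, by linarith⟩ logRatio_zero
    exact hslope.injOn ⟨⟨hδ.le, hδσ⟩, hδ.ne'⟩ ⟨⟨zero_le_one, hσ⟩, one_ne_zero⟩
      ((rpow_mul_sub_eq_add_iff hσ hδ hδσ).1 h)
  · rintro rfl
    rw [rpow_one, div_mul_cancel₀ _ (by linarith)]
end

section
/- Let σ > 1 and set T = log((σ+1)/(σ−1)). Then π/(2T) < σ, and for every δ with 0 < δ < π/(2T) one has tan(Tδ) > 2σδ/(σ² − δ²). -/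
/-!
With `u = 1/σ` one has `T = log((1+u)/(1-u)) = 2 artanh u > 2u = 2/σ`, whence `π/(2T) < πσ/4 < σ`.
On the other hand `2σδ/(σ² − δ²) = tan(2 arctan(δ/σ))` and `2 arctan(δ/σ) < 2δ/σ < Tδ < π/2`,
so the claim follows from the monotonicity of `tan` on `[0, π/2)`.
-/

open Real

theorem Real.arctan_lt_self {x : ℝ} (hx : 0 < x) : arctan x < x := by
  simpa only [tan_arctan] using lt_tan (arctan_pos.mpr hx) (arctan_lt_pi_div_two x)

/-- `2/σ` is the first term of the series `log (1 + a⁻¹) = ∑ 2 / ((2k+1) (2a+1)^(2k+1))` at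
`a = (σ - 1)/2`. -/
theorem two_div_lt_log_div {σ : ℝ} (hσ : 1 < σ) : 2 / σ < log ((σ + 1) / (σ - 1)) := by
  have ha : 0 < (σ - 1) / 2 := by linarith
  have hsum := hasSum_log_one_add_inv ha
  have hσ' : 2 * ((σ - 1) / 2) + 1 = σ := by ring
  have hlog : 1 + ((σ - 1) / 2)⁻¹ = (σ + 1) / (σ - 1) := by
    field_simp [(by linarith : σ - 1 ≠ 0)]
    ring
  rw [hσ', hlog] at hsum
  have hσ0 : 0 < σ := by linarith
  simpa [div_eq_mul_inv] using
    lt_hasSum hsum 0 (fun _ _ ↦ by positivity) 1 one_ne_zero (by positivity)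

theorem div_sq_sub_sq_eq_tan_two_mul_arctan {σ : ℝ} (hσ : σ ≠ 0) (δ : ℝ) :
    2 * σ * δ / (σ ^ 2 - δ ^ 2) = tan (2 * arctan (δ / σ)) := by
  rw [tan_two_mul, tan_arctan]
  field_simp

theorem div_sq_sub_sq_lt_tan_mul {σ T δ : ℝ} (hσ : 0 < σ) (hT : 2 / σ ≤ T) (hδ : 0 < δ)
    (hTδ : T * δ < π / 2) : 2 * σ * δ / (σ ^ 2 - δ ^ 2) < tan (T * δ) := by
  rw [div_sq_sub_sq_eq_tan_two_mul_arctan hσ.ne']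
  have hlt : 2 * arctan (δ / σ) < T * δ :=
    calc 2 * arctan (δ / σ) < 2 * (δ / σ) := by gcongr; exact arctan_lt_self (by positivity)
      _ = 2 / σ * δ := by ring
      _ ≤ T * δ := by gcongr
  exact tan_lt_tan_of_nonneg_of_lt_pi_div_two (by positivity [arctan_pos.mpr (div_pos hδ hσ)])
    hTδ hlt

/-- for `σ > 1` and `T = log((σ+1)/(σ−1))`, one has
`π/(2T) < σ` and `tan(Tδ) > 2σδ/(σ² − δ²)` for every `δ ∈ (0, π/(2T))`. -/
theorem tan_above_rational_branch
    (σ T : ℝ) (hσ : 1 < σ) (hT : T = Real.log ((σ + 1) / (σ - 1))) :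
    π / (2 * T) < σ ∧
    ∀ δ : ℝ, 0 < δ → δ < π / (2 * T) →
      2 * σ * δ / (σ ^ 2 - δ ^ 2) < Real.tan (T * δ) := by
  have hσ0 : 0 < σ := by linarith
  have hT2 : 2 / σ < T := hT ▸ two_div_lt_log_div hσ
  have hT0 : 0 < T := lt_trans (by positivity) hT2
  refine ⟨?_, fun δ hδ hδT ↦ div_sq_sub_sq_lt_tan_mul hσ0 hT2.le hδ ?_⟩
  · rw [div_lt_iff₀ (by positivity)]
    have : 2 < σ * T := by rwa [div_lt_iff₀' hσ0] at hT2
    nlinarith [pi_lt_four]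
  · rw [lt_div_iff₀ (by positivity)] at hδT
    linarith
end

section
/- Let r > 0, T > 0 and set ϖ = 1/(r²(1+r²)). There exists a smooth function u : ℝ² → ℝ, 2π-periodic in each variable (u(t+2π,θ) = u(t,θ) = u(t,θ+2π) for all (t,θ)) and not identically zero, satisfying (2π/T)²·(1/(1+r²))·∂²u/∂t² + (1/r²)·∂²u/∂θ² + ϖ·u = 0 at every point of ℝ², if and only if T = 2πmr for some positive integer m. -/
/-!
Write `A = (2π/T)²/(1 + r²)` and `B = 1/r²`. On a `2π`-biperiodic `C²` function, integration by
parts turns `A ∂ₜ² + B ∂_θ² + ϖ` into multiplication of the Fourier coefficient of index `(k, l)`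
by `ϖ - A k² - B l²`. A continuous periodic function whose Fourier coefficients all vanish is zero
(Parseval), so a nonzero kernel element forces this symbol to vanish for some integers `k, l`.
Multiplied by `r²(1 + r²)` the symbol is `1 - (2πrk/T)² - (1 + r²) l²`, which vanishes only for
`l = 0` and `T = 2π|k|r`. Conversely, for `T = 2πmr` the function `cos (m t)` lies in the kernel.
-/

open Real Function MeasureTheory Set

theorem Function.Periodic.deriv {E : Type*} [NormedAddCommGroup E] [NormedSpace ℝ E]
    {f : ℝ → E} {c : ℝ} (h : Periodic f c) : Periodic (deriv f) c := fun x => by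
  rw [← deriv_comp_add_const, h.funext]

section FourierCoeffOn

variable {a b : ℝ} (hab : a < b)

theorem fourierCoeffOn_zero_fun {E : Type*} [NormedAddCommGroup E] [NormedSpace ℂ E] (n : ℤ) :
    fourierCoeffOn hab (fun _ => (0 : E)) n = 0 := by
  simp [fourierCoeffOn_eq_integral]

theorem fourierCoeffOn_add {E : Type*} [NormedAddCommGroup E] [NormedSpace ℂ E] {f g : ℝ → E}
    (hf : IntervalIntegrable f volume a b) (hg : IntervalIntegrable g volume a b) (n : ℤ) :
    fourierCoeffOn hab (fun x => f x + g x) n = fourierCoeffOn hab f n + fourierCoeffOn hab g n := by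
  have he : ContinuousOn (fun x : ℝ => fourier (-n) (x : AddCircle (b - a))) (uIcc a b) :=
    ((map_continuous _).comp (AddCircle.continuous_mk' _)).continuousOn
  simp only [fourierCoeffOn_eq_integral, smul_add]
  rw [intervalIntegral.integral_add (hf.continuousOn_smul he) (hg.continuousOn_smul he), smul_add]

theorem fourierCoeffOn_deriv {f f' : ℝ → ℂ} (hf : ∀ x, HasDerivAt f (f' x) x)
    (hf' : IntervalIntegrable f' volume a b) (hfab : f a = f b) (n : ℤ) :
    fourierCoeffOn hab f' n = 2 * π * Complex.I * n / (b - a) * fourierCoeffOn hab f n := by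
  rcases eq_or_ne n 0 with rfl | hn
  · simp [fourierCoeffOn_eq_integral,
      intervalIntegral.integral_eq_sub_of_hasDerivAt (fun x _ => hf x) hf', hfab]
  · rw [fourierCoeffOn_of_hasDerivAt hab hn (fun x _ => hf x) hf', hfab, sub_self, mul_zero,
      zero_sub]
    have hn' : (n : ℂ) ≠ 0 := Int.cast_ne_zero.2 hn
    have hba : ((b - a : ℝ) : ℂ) ≠ 0 := Complex.ofReal_ne_zero.2 (sub_pos.2 hab).ne'
    push_cast at hba ⊢
    field_simp

theorem fourierCoeffOn_deriv_deriv {f : ℝ → ℂ} (hf : ContDiff ℝ 2 f) (hper : Periodic f (b - a))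
    (n : ℤ) :
    fourierCoeffOn hab (deriv (deriv f)) n = -(2 * π * n / (b - a)) ^ 2 * fourierCoeffOn hab f n := by
  have hf' : ContDiff ℝ 1 (deriv f) := (contDiff_succ_iff_deriv (n := 1)).1 hf |>.2.2
  have hend : ∀ g : ℝ → ℂ, Periodic g (b - a) → g a = g b := fun g hg => by
    simpa using (hg a).symm
  rw [fourierCoeffOn_deriv hab (fun x => (hf'.differentiable one_ne_zero x).hasDerivAt)
      ((hf'.continuous_deriv le_rfl).intervalIntegrable _ _) (hend _ hper.deriv),
    fourierCoeffOn_deriv hab (fun x => (hf.differentiable two_ne_zero x).hasDerivAt)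
      (hf'.continuous.intervalIntegrable _ _) (hend _ hper)]
  linear_combination (2 * π * n / (b - a) : ℂ) ^ 2 * fourierCoeffOn hab f n * Complex.I_sq

theorem eq_zero_of_fourierCoeffOn_eq_zero {f : ℝ → ℂ} (hf : Continuous f)
    (hper : Periodic f (b - a)) (h : ∀ n, fourierCoeffOn hab f n = 0) : f = 0 := by
  have hsq : Continuous fun x => ‖f x‖ ^ 2 := by fun_prop
  have hL2 : MemLp f 2 (volume.restrict (Ioc a b)) :=
    (memLp_two_iff_integrable_sq_norm hf.aestronglyMeasurable).2
      (hsq.integrableOn_Icc.mono_set Ioc_subset_Icc_self)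
  have hsum := hasSum_sq_fourierCoeffOn hab hL2
  simp only [h, norm_zero, ne_eq, OfNat.ofNat_ne_zero, not_false_eq_true, zero_pow] at hsum
  have hint : ∫ x in a..b, ‖f x‖ ^ 2 = 0 := by
    simpa [(sub_pos.2 hab).ne'] using hasSum_zero.unique hsum
  have hae : f =ᵐ[volume.restrict (Icc a b)] 0 := by
    rw [← Measure.restrict_congr_set Ioc_ae_eq_Icc]
    filter_upwards [(intervalIntegral.integral_eq_zero_iff_of_le_of_nonneg_ae hab.le
      (ae_of_all _ fun _ => by positivity) (hsq.intervalIntegrable _ _)).1 hint] with x hx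
    simpa using hx
  have hzero : EqOn f 0 (Icc a b) := Measure.eqOn_of_ae_eq hae hf.continuousOn
    continuousOn_const (by simp [closure_Ioo hab.ne])
  funext x
  obtain ⟨y, hy, hxy⟩ := hper.exists_mem_Ico (sub_pos.2 hab) x a
  rw [hxy, hzero (Ico_subset_Icc_self (by simpa using hy))]
  rfl

theorem fourierCoeffOn_fourierCoeffOn_comm {c d : ℝ} (hcd : c < d) {F : ℝ → ℝ → ℂ}
    (hF : Continuous (uncurry F)) (k l : ℤ) :
    fourierCoeffOn hab (fun t => fourierCoeffOn hcd (F t) l) k =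
      fourierCoeffOn hcd (fun θ => fourierCoeffOn hab (fun t => F t θ) k) l := by
  simp only [fourierCoeffOn_eq_integral, smul_eq_mul, Complex.real_smul,
    ← intervalIntegral.integral_const_mul]
  rw [intervalIntegral_intervalIntegral_swap]
  · congr 1 with θ
    congr 1 with t
    ring
  · refine ContinuousOn.integrableOn_compact (isCompact_uIcc.prod isCompact_uIcc) ?_
      |>.mono_set (prod_mono uIoc_subset_uIcc uIoc_subset_uIcc)
    exact Continuous.continuousOn (by fun_prop)

theorem continuous_parametric_fourierCoeffOn {F : ℝ → ℝ → ℂ} (hF : Continuous (uncurry F))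
    (n : ℤ) : Continuous fun t => fourierCoeffOn hab (F t) n := by
  simp only [fourierCoeffOn_eq_integral]
  exact continuous_const.smul
    (intervalIntegral.continuous_parametric_intervalIntegral_of_continuous' (by fun_prop) _ _)

end FourierCoeffOn

theorem continuous_deriv_deriv_fst {E : Type*} [NormedAddCommGroup E] [NormedSpace ℝ E]
    {u : ℝ → ℝ → E} (hu : ContDiff ℝ 2 (uncurry u)) :
    Continuous (uncurry fun t θ => deriv (deriv fun x => u x θ) t) := by
  have hpartial : ∀ g : ℝ × ℝ → E, Differentiable ℝ g →
      ∀ θ, deriv (fun x => g (x, θ)) = fun t => fderiv ℝ g (t, θ) (1, 0) :=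
    fun g hg θ => funext fun t => ((hg _).hasFDerivAt.comp_hasDerivAt t
      ((hasDerivAt_id t).prodMk (hasDerivAt_const t θ))).deriv
  set g : ℝ × ℝ → E := fun p => fderiv ℝ (uncurry u) p (1, 0)
  have hg : ContDiff ℝ 1 g :=
    (ContinuousLinearMap.apply ℝ E ((1, 0) : ℝ × ℝ)).contDiff.comp (hu.fderiv_right le_rfl)
  have : (uncurry fun t θ => deriv (deriv fun x => u x θ) t) = fun p => fderiv ℝ g p (1, 0) := by
    funext ⟨t, θ⟩
    have h1 : deriv (fun x => u x θ) = fun t => g (t, θ) :=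
      hpartial (uncurry u) (hu.differentiable two_ne_zero) θ
    rw [uncurry_apply_pair, h1, hpartial g (hg.differentiable one_ne_zero) θ]
  rw [this]
  exact (hg.continuous_fderiv one_ne_zero).clm_apply continuous_const

theorem eq_zero_of_fourierCoeffOn_fourierCoeffOn_eq_zero {a b c d : ℝ} (hab : a < b)
    (hcd : c < d) {u : ℝ → ℝ → ℂ} (hu : Continuous (uncurry u))
    (hper_fst : ∀ θ, Periodic (fun t => u t θ) (b - a)) (hper_snd : ∀ t, Periodic (u t) (d - c))
    (h : ∀ k l, fourierCoeffOn hab (fun t => fourierCoeffOn hcd (u t) l) k = 0) : u = 0 := by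
  have hmodes : ∀ l t, fourierCoeffOn hcd (u t) l = 0 := fun l =>
    congrFun (eq_zero_of_fourierCoeffOn_eq_zero hab (continuous_parametric_fourierCoeffOn hcd hu l)
      (fun t => congrArg (fourierCoeffOn hcd · l) (funext fun θ => hper_fst θ t)) (fun k => h k l))
  funext t
  exact eq_zero_of_fourierCoeffOn_eq_zero hcd (hu.comp (Continuous.prodMk_right t)) (hper_snd t)
    (fun l => hmodes l t)

theorem fourierCoeffOn_two_pi_deriv_deriv {f : ℝ → ℂ} (hf : ContDiff ℝ 2 f)
    (hper : Periodic f (2 * π)) (n : ℤ) :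
    fourierCoeffOn two_pi_pos (deriv (deriv f)) n = -n ^ 2 * fourierCoeffOn two_pi_pos f n := by
  rw [fourierCoeffOn_deriv_deriv two_pi_pos hf (by simpa using hper)]
  congr 1
  field_simp
  push_cast
  ring

theorem mul_fourierCoeffOn_fourierCoeffOn_eq_zero_of_pde {u : ℝ → ℝ → ℂ} {a b c : ℂ}
    (hu : ContDiff ℝ 2 (uncurry u)) (hper_fst : ∀ θ, Periodic (fun t => u t θ) (2 * π))
    (hper_snd : ∀ t, Periodic (u t) (2 * π))
    (hpde : ∀ t θ, a * deriv (deriv fun x => u x θ) t + b * deriv (deriv (u t)) θ + c * u t θ = 0)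
    (k l : ℤ) :
    (a * k ^ 2 + b * l ^ 2 - c) *
      fourierCoeffOn two_pi_pos (fun t => fourierCoeffOn two_pi_pos (u t) l) k = 0 := by
  have hutt : Continuous (uncurry fun t θ => deriv (deriv fun x => u x θ) t) :=
    continuous_deriv_deriv_fst hu
  have hsec_fst : ∀ θ, ContDiff ℝ 2 fun t => u t θ := fun θ =>
    hu.comp (contDiff_id.prodMk contDiff_const)
  have hsec_snd : ∀ t, ContDiff ℝ 2 (u t) := fun t => hu.comp (contDiff_const.prodMk contDiff_id)
  have hmode : ∀ t, a * fourierCoeffOn two_pi_pos (fun θ => deriv (deriv fun x => u x θ) t) l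
      + (c - b * l ^ 2) * fourierCoeffOn two_pi_pos (u t) l = 0 := by
    intro t
    have hc_tt : Continuous fun θ => deriv (deriv fun x => u x θ) t :=
      hutt.comp (Continuous.prodMk_right t)
    have hc_θθ : Continuous (deriv (deriv (u t))) :=
      ((contDiff_succ_iff_deriv (n := 1)).1 (hsec_snd t)).2.2.continuous_deriv le_rfl
    have h0 := congrArg (fourierCoeffOn two_pi_pos · l) (funext (hpde t))
    rw [fourierCoeffOn_add, fourierCoeffOn_add, fourierCoeffOn.const_mul, fourierCoeffOn.const_mul,
      fourierCoeffOn.const_mul, fourierCoeffOn_two_pi_deriv_deriv (hsec_snd t) (hper_snd t),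
      fourierCoeffOn_zero_fun] at h0
    · linear_combination h0
    all_goals exact Continuous.intervalIntegrable (by fun_prop) _ _
  -- Exchanging the two integrations lets the `t`-derivatives be integrated by parts.
  have hswap : fourierCoeffOn two_pi_pos
      (fun t => fourierCoeffOn two_pi_pos (fun θ => deriv (deriv fun x => u x θ) t) l) k =
        -k ^ 2 * fourierCoeffOn two_pi_pos (fun t => fourierCoeffOn two_pi_pos (u t) l) k := by
    rw [fourierCoeffOn_fourierCoeffOn_comm two_pi_pos two_pi_pos hutt,
      fourierCoeffOn_fourierCoeffOn_comm two_pi_pos two_pi_pos hu.continuous]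
    simp only [fourierCoeffOn_two_pi_deriv_deriv (hsec_fst _) (hper_fst _),
      fourierCoeffOn.const_mul]
  have hc_tt := continuous_parametric_fourierCoeffOn two_pi_pos hutt l
  have hc_u := continuous_parametric_fourierCoeffOn two_pi_pos hu.continuous l
  have h1 := congrArg (fourierCoeffOn two_pi_pos · k) (funext hmode)
  rw [fourierCoeffOn_add, fourierCoeffOn.const_mul, fourierCoeffOn.const_mul, hswap,
    fourierCoeffOn_zero_fun] at h1
  · linear_combination -h1
  all_goals exact Continuous.intervalIntegrable (by fun_prop) _ _

theorem eq_zero_of_biperiodic_of_pde {u : ℝ → ℝ → ℂ} {a b c : ℂ}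
    (hu : ContDiff ℝ 2 (uncurry u)) (hper_fst : ∀ θ, Periodic (fun t => u t θ) (2 * π))
    (hper_snd : ∀ t, Periodic (u t) (2 * π))
    (hpde : ∀ t θ, a * deriv (deriv fun x => u x θ) t + b * deriv (deriv (u t)) θ + c * u t θ = 0)
    (hspec : ∀ k l : ℤ, a * k ^ 2 + b * l ^ 2 ≠ c) : u = 0 :=
  eq_zero_of_fourierCoeffOn_fourierCoeffOn_eq_zero two_pi_pos two_pi_pos hu.continuous
    (by simpa using hper_fst) (by simpa using hper_snd) fun k l =>
      (mul_eq_zero.1 (mul_fourierCoeffOn_fourierCoeffOn_eq_zero_of_pde hu hper_fst hper_snd hpde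
        k l)).resolve_left (sub_ne_zero.2 (hspec k l))

theorem deriv_ofReal_comp (f : ℝ → ℝ) :
    deriv (fun x => (f x : ℂ)) = fun x => ((deriv f x : ℝ) : ℂ) := by
  funext x
  by_cases hf : DifferentiableAt ℝ f x
  · exact hf.hasDerivAt.ofReal_comp.deriv
  · have hf' : ¬DifferentiableAt ℝ (fun y => (f y : ℂ)) x := fun h =>
      hf (by simpa [Function.comp_def] using Complex.differentiable_re.differentiableAt.comp x h)
    rw [deriv_zero_of_not_differentiableAt hf, deriv_zero_of_not_differentiableAt hf',
      Complex.ofReal_zero]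

theorem deriv_deriv_cos_mul (ω t : ℝ) :
    deriv (deriv fun x => cos (ω * x)) t = -(ω ^ 2 * cos (ω * t)) := by
  have hlin : ∀ x, HasDerivAt (fun x => ω * x) ω x := fun x => by
    simpa using (hasDerivAt_id x).const_mul ω
  have h : deriv (fun x => cos (ω * x)) = fun x => -sin (ω * x) * ω :=
    funext fun x => (hlin x).cos.deriv
  rw [h, ((hlin t).sin.fun_neg.mul_const ω).deriv]
  ring

theorem exists_nat_eq_of_jacobi_eigenvalue {r T : ℝ} (hr : 0 < r) (hT : 0 < T) {k l : ℤ}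
    (h : (2 * π / T) ^ 2 * (1 / (1 + r ^ 2)) * k ^ 2 + 1 / r ^ 2 * l ^ 2 = 1 / (r ^ 2 * (1 + r ^ 2))) :
    ∃ m : ℕ, 1 ≤ m ∧ T = 2 * π * m * r := by
  have key : (2 * π * r * k / T) ^ 2 + (1 + r ^ 2) * l ^ 2 = 1 := by
    field_simp at h ⊢
    linear_combination h
  have hl : l = 0 := by
    by_contra hl
    have hl1 : (1 : ℝ) ≤ |(l : ℝ)| := by exact_mod_cast Int.one_le_abs hl
    have hl2 : (1 : ℝ) ≤ l ^ 2 := by nlinarith [sq_abs (l : ℝ)]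
    nlinarith [sq_nonneg (2 * π * r * k / T), pow_pos hr 2]
  subst hl
  have hk : |2 * π * r * k / T| = 1 := by
    rw [← abs_one, ← sq_eq_sq_iff_abs_eq_abs]
    simpa using key
  rw [abs_div, abs_mul, abs_of_pos (by positivity : 0 < 2 * π * r), abs_of_pos hT,
    div_eq_one_iff_eq hT.ne'] at hk
  refine ⟨k.natAbs, ?_, ?_⟩
  · rw [Nat.one_le_iff_ne_zero, Int.natAbs_ne_zero]
    rintro rfl
    simp at hk
    linarith
  · rw [← hk, Nat.cast_natAbs, Int.cast_abs]
    ring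

/-- the rescaled Jacobi operator
`L = (2π/T)²(1/(1+r²))∂ₜ² + (1/r²)∂_θ² + ϖ`, `ϖ = 1/(r²(1+r²))`, of a Killing
cylinder has a nontrivial `2π`-biperiodic kernel iff `T = 2πmr` for some
positive integer `m` (the bifurcation condition producing Delaunay surfaces). -/
theorem killing_cylinder_bifurcation_kernel
    (r T : ℝ) (hr : 0 < r) (hT : 0 < T) :
    (∃ u : ℝ → ℝ → ℝ,
      ContDiff ℝ 2 (Function.uncurry u) ∧
      (∀ t θ : ℝ, u (t + 2 * π) θ = u t θ ∧ u t (θ + 2 * π) = u t θ) ∧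
      (∃ t θ : ℝ, u t θ ≠ 0) ∧
      (∀ t θ : ℝ,
        (2 * π / T) ^ 2 * (1 / (1 + r ^ 2)) * deriv (deriv (fun x => u x θ)) t
          + (1 / r ^ 2) * deriv (deriv (u t)) θ
          + (1 / (r ^ 2 * (1 + r ^ 2))) * u t θ = 0)) ↔
    (∃ m : ℕ, 1 ≤ m ∧ T = 2 * π * (m : ℝ) * r) := by
  constructor
  · rintro ⟨u, hu, hper, ⟨t₀, θ₀, hne⟩, hpde⟩
    obtain ⟨k, l, hkl⟩ : ∃ k l : ℤ, (2 * π / T) ^ 2 * (1 / (1 + r ^ 2)) * k ^ 2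
        + 1 / r ^ 2 * l ^ 2 = 1 / (r ^ 2 * (1 + r ^ 2)) := by
      by_contra! hspec
      have hzero := eq_zero_of_biperiodic_of_pde (u := fun t θ => (u t θ : ℂ))
        (a := ((2 * π / T) ^ 2 * (1 / (1 + r ^ 2)) : ℝ)) (b := ((1 / r ^ 2 : ℝ)))
        (c := ((1 / (r ^ 2 * (1 + r ^ 2)) : ℝ)))
        (Complex.ofRealCLM.contDiff.comp hu) (fun θ t => congrArg _ (hper t θ).1)
        (fun t θ => congrArg _ (hper t θ).2)
        (fun t θ => by simp only [deriv_ofReal_comp]; exact_mod_cast hpde t θ)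
        (fun k l h => hspec k l (by exact_mod_cast h))
      exact hne (by simpa using congrFun (congrFun hzero t₀) θ₀)
    exact exists_nat_eq_of_jacobi_eigenvalue hr hT hkl
  · rintro ⟨m, hm, rfl⟩
    have hm0 : (m : ℝ) ≠ 0 := by exact_mod_cast (by omega : m ≠ 0)
    refine ⟨fun t _ => cos (m * t), ?_, fun t θ => ⟨?_, rfl⟩, ⟨0, 0, by simp⟩, fun t θ => ?_⟩
    · exact contDiff_cos.comp (contDiff_const.mul contDiff_fst)
    · show cos (m * (t + 2 * π)) = cos (m * t)
      rw [mul_add]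
      exact cos_periodic.nat_mul m (m * t)
    · simp only [deriv_deriv_cos_mul, deriv_const', deriv_const]
      field_simp
      ring
end
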